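/- arXiv:0811.2572 — 3 statements merged into one kernel-verified Lean document; each statement's English description precedes it below -/
import Mathlib

section
/- If G is a perfect graph on n ≥ 1 vertices, then H(G) + H(Ḡ) = log₂ n, where Ḡ denotes the complement graph of G. -/
/-!
The inequality `log n ≤ H(G) + H(Ḡ)` holds for every graph: a stable set and a clique share at
most one vertex, so `∑ v, x v * z v ≤ 1` for `x ∈ STAB G` and `z ∈ STAB Ḡ`, and summing
`log t ≤ t - 1` over `t = n x_v z_v` gives `log n ≤ -(1/n) ∑ v, log (x v * z v)`.

For the converse let `x` maximize `∏ v, x v` over `STAB G`. Optimality in the direction of a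
stable set `S` says `∑ v ∈ S, 1 / x v ≤ n`, so `y = 1 / (n x)` satisfies every stable set
inequality, and the pair `x, y` attains `log n`. It remains to see `y ∈ STAB Ḡ`, which is where
perfection enters: a hyperplane separating `y` from `STAB Ḡ` would give weights `c ≥ 0` with
`∑ v, y v * c v` larger than the weight of every clique, contradicting the weighted form of
perfection (the vertices can be covered with multiplicities `w` by as many stable sets as the
maximum `w`-weight of a clique). For `0/1` weights this is perfection of the subgraph induced
on the support; in general it follows by induction on the total weight. Lower the weight of a
vertex `u` of weight `≥ 2` by one and cover the result. If the maximum clique weight drops, add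
`{u}` to that cover. Otherwise a stable set `A ∋ u` of the cover meets every clique of maximum
weight, so lowering all weights on `A` lowers the maximum clique weight; cover those weights
and add `A`.
-/

/-- A stable (independent) set of a simple graph, as a `Finset` of vertices. -/
def IsStableSet {V : Type*} (G : SimpleGraph V) (S : Finset V) : Prop :=
  ∀ v ∈ S, ∀ w ∈ S, ¬ G.Adj v w

/-- The stable set polytope `STAB(G)`: the convex hull of characteristic vectors
of stable sets of `G`. -/
noncomputable def STAB {V : Type*} [Fintype V] [DecidableEq V] (G : SimpleGraph V) :
    Set (V → ℝ) :=
  convexHull ℝ {x | ∃ S : Finset V, IsStableSet G S ∧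
    x = fun v => if v ∈ S then (1 : ℝ) else 0}

/-- The (Körner) entropy of a graph `G` on `n` vertices:
`H(G) = min_{x ∈ STAB(G), x > 0} -(1/n) ∑_v log₂ x_v`. -/
noncomputable def graphEntropy {V : Type*} [Fintype V] [DecidableEq V]
    (G : SimpleGraph V) : ℝ :=
  sInf {h : ℝ | ∃ x ∈ STAB G, (∀ v, 0 < x v) ∧
    h = -(1 / (Fintype.card V : ℝ)) * ∑ v, Real.logb 2 (x v)}

/-- A graph is perfect if every induced subgraph has clique number equal to
chromatic number. -/
def IsPerfect {V : Type*} (G : SimpleGraph V) : Prop :=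
  ∀ U : Set V, ((G.induce U).cliqueNum : ℕ∞) = (G.induce U).chromaticNumber


open Finset

section MaxCliqueWeight

variable {V : Type*} [Fintype V] {G : SimpleGraph V} {w : V → ℕ}

open Classical in
noncomputable def maxCliqueWeight (G : SimpleGraph V) (w : V → ℕ) : ℕ :=
  ((univ : Finset (Finset V)).filter fun K : Finset V => G.IsClique (K : Set V)).sup
    fun K => ∑ v ∈ K, w v

lemma sum_le_maxCliqueWeight {K : Finset V} (hK : G.IsClique (K : Set V)) (w : V → ℕ) :
    ∑ v ∈ K, w v ≤ maxCliqueWeight G w := by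
  classical
  unfold maxCliqueWeight
  exact le_sup (f := fun K => ∑ v ∈ K, w v) (mem_filter.2 ⟨mem_univ K, hK⟩)

lemma maxCliqueWeight_le_iff {t : ℕ} :
    maxCliqueWeight G w ≤ t ↔
      ∀ K : Finset V, G.IsClique (K : Set V) → ∑ v ∈ K, w v ≤ t := by
  classical
  simp [maxCliqueWeight]

lemma exists_isClique_sum_eq_maxCliqueWeight (G : SimpleGraph V) (w : V → ℕ) :
    ∃ K : Finset V, G.IsClique (K : Set V) ∧ ∑ v ∈ K, w v = maxCliqueWeight G w := by
  classical
  unfold maxCliqueWeight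
  obtain ⟨K, hK, h⟩ := exists_mem_eq_sup
    (univ.filter fun K : Finset V => G.IsClique (K : Set V)) ⟨∅, by simp⟩
    fun K => ∑ v ∈ K, w v
  exact ⟨K, (mem_filter.1 hK).2, h.symm⟩

lemma maxCliqueWeight_mono {w' : V → ℕ} (h : ∀ v, w v ≤ w' v) :
    maxCliqueWeight G w ≤ maxCliqueWeight G w' :=
  maxCliqueWeight_le_iff.2 fun _ hK =>
    (sum_le_sum fun v _ => h v).trans (sum_le_maxCliqueWeight hK w')

lemma cliqueNum_induce_le_maxCliqueWeight (G : SimpleGraph V) (w : V → ℕ) :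
    (G.induce {v | 0 < w v}).cliqueNum ≤ maxCliqueWeight G w := by
  obtain ⟨K, hK⟩ := (G.induce {v | 0 < w v}).exists_isNClique_cliqueNum
  have hK' := (hK.map (f := Function.Embedding.subtype _)).mono (G.spanningCoe_induce_le _)
  calc (G.induce {v | 0 < w v}).cliqueNum
        = ∑ v ∈ K.map (Function.Embedding.subtype _), 1 := by simp [hK.card_eq]
    _ ≤ ∑ v ∈ K.map (Function.Embedding.subtype _), w v := by
        refine sum_le_sum fun v hv => ?_
        obtain ⟨v, -, rfl⟩ := mem_map.1 hv
        exact v.2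
    _ ≤ maxCliqueWeight G w := sum_le_maxCliqueWeight hK'.1 w

end MaxCliqueWeight

section StableCover

variable {V : Type*} {G : SimpleGraph V}

lemma isStableSet_singleton (G : SimpleGraph V) (u : V) : IsStableSet G {u} := by
  simp [IsStableSet]

lemma isStableSet_compl_iff {C : Finset V} : IsStableSet Gᶜ C ↔ G.IsClique (C : Set V) := by
  simp only [IsStableSet, SimpleGraph.compl_adj, not_and, not_not]
  exact ⟨fun h a ha b hb => h a ha b hb, fun h a ha b hb => h ha hb⟩

variable [DecidableEq V]

lemma card_inter_le_one_of_isStableSet {A K : Finset V} (hA : IsStableSet G A)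
    (hK : G.IsClique (K : Set V)) : #(K ∩ A) ≤ 1 := by
  rw [Finset.card_le_one]
  intro a ha b hb
  simp only [mem_inter] at ha hb
  by_contra hab
  exact hA a ha.2 b hb.2 (hK ha.1 hb.1 hab)

lemma sum_countP_mem_nsmul {M : Type*} [AddCommMonoid M] (L : Multiset (Finset V))
    (s : Finset V) (f : V → M) :
    ∑ v ∈ s, L.countP (v ∈ ·) • f v = (L.map fun A => ∑ v ∈ s ∩ A, f v).sum := by
  induction L using Multiset.induction with
  | empty => simp
  | cons A L ih =>
    simp only [Multiset.countP_cons, add_smul, sum_add_distrib, ih, Multiset.map_cons,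
      Multiset.sum_cons, ite_smul, one_smul, zero_smul, ← sum_filter, filter_mem_eq_inter]
    rw [add_comm]

lemma sum_countP_mem_le_card {L : Multiset (Finset V)} (hL : ∀ A ∈ L, IsStableSet G A)
    {K : Finset V} (hK : G.IsClique (K : Set V)) :
    ∑ v ∈ K, L.countP (v ∈ ·) ≤ Multiset.card L := by
  have h := sum_countP_mem_nsmul L K (fun _ => 1)
  simp only [smul_eq_mul, mul_one, ← card_eq_sum_ones] at h
  rw [h]
  simpa using Multiset.sum_le_card_nsmul (L.map fun A => #(K ∩ A)) 1 (by
    intro _ hx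
    obtain ⟨A, hA, rfl⟩ := Multiset.mem_map.1 hx
    exact card_inter_le_one_of_isStableSet (hL A hA) hK)

def IsStableCover (G : SimpleGraph V) (w : V → ℕ) (L : Multiset (Finset V)) : Prop :=
  (∀ A ∈ L, IsStableSet G A) ∧ ∀ v, w v ≤ L.countP (v ∈ ·)

variable {w : V → ℕ} {L : Multiset (Finset V)}

lemma IsStableCover.cons (hL : IsStableCover G w L) {A : Finset V} (hA : IsStableSet G A)
    {w' : V → ℕ} (hw' : ∀ v, w' v ≤ w v + if v ∈ A then 1 else 0) :
    IsStableCover G w' (A ::ₘ L) := by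
  refine ⟨fun B hB => ?_, fun v => ?_⟩
  · rcases Multiset.mem_cons.1 hB with rfl | hB
    exacts [hA, hL.1 B hB]
  · rw [Multiset.countP_cons]
    exact (hw' v).trans (Nat.add_le_add_right (hL.2 v) _)

lemma IsStableCover.exists_mem_inter_pos (hL : IsStableCover G w L) {K : Finset V}
    (hK : G.IsClique (K : Set V)) (hcard : Multiset.card L ≤ ∑ v ∈ K, w v) {A : Finset V}
    (hA : A ∈ L) : ∃ a ∈ K, a ∈ A ∧ 0 < w a := by
  by_contra! hzero
  -- then `L` without `A` still covers `K`, with fewer than `∑ v ∈ K, w v` sets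
  obtain ⟨L₀, rfl⟩ := Multiset.exists_cons_of_mem hA
  have hcover : ∀ v ∈ K, w v ≤ L₀.countP (v ∈ ·) := by
    intro v hv
    have := hL.2 v
    by_cases hvA : v ∈ A
    · have := hzero v hv hvA
      omega
    · simpa [Multiset.countP_cons, hvA] using this
  have := (sum_le_sum hcover).trans
    (sum_countP_mem_le_card (fun B hB => hL.1 B (Multiset.mem_cons_of_mem hB)) hK)
  simp only [Multiset.card_cons] at hcard
  omega

lemma sum_sub_indicator_lt {s A : Finset V} {a : V} (has : a ∈ s) (haA : a ∈ A)
    (hw : 0 < w a) :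
    ∑ v ∈ s, (w v - if v ∈ A then 1 else 0) < ∑ v ∈ s, w v :=
  sum_lt_sum (fun _ _ => Nat.sub_le _ _) ⟨a, has, by simp [haA, hw]⟩

variable [Fintype V]

lemma exists_isStableCover_of_colorable (hw : ∀ v, w v ≤ 1) {k : ℕ}
    (hk : (G.induce {v | 0 < w v}).Colorable k) :
    ∃ L, IsStableCover G w L ∧ Multiset.card L = k := by
  obtain ⟨C⟩ := hk
  let A : Fin k → Finset V := fun i => univ.filter fun v => ∃ h : 0 < w v, C ⟨v, h⟩ = i
  refine ⟨univ.val.map A, ⟨fun B hB => ?_, fun v => ?_⟩, by simp⟩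
  · obtain ⟨i, -, rfl⟩ := Multiset.mem_map.1 hB
    intro a ha b hb hab
    simp only [A, mem_filter, mem_univ, true_and] at ha hb
    obtain ⟨ha, rfl⟩ := ha
    obtain ⟨hb, hCb⟩ := hb
    exact C.valid (show (G.induce _).Adj ⟨a, ha⟩ ⟨b, hb⟩ from hab) hCb.symm
  · rcases Nat.eq_zero_or_pos (w v) with h | h
    · simp [h]
    · have : 0 < Multiset.countP (v ∈ ·) (univ.val.map A) :=
        Multiset.countP_pos.2 ⟨A (C ⟨v, h⟩), Multiset.mem_map_of_mem _ (mem_univ_val _),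
          by simp [A, h]⟩
      have := hw v
      omega

lemma IsPerfect.exists_isStableCover_of_le_one (hG : IsPerfect G) (hw : ∀ v, w v ≤ 1) :
    ∃ L, IsStableCover G w L ∧ Multiset.card L ≤ maxCliqueWeight G w := by
  obtain ⟨L, hL, hcard⟩ := exists_isStableCover_of_colorable hw
    (SimpleGraph.chromaticNumber_le_iff_colorable.1 (hG _).ge)
  exact ⟨L, hL, hcard ▸ cliqueNum_induce_le_maxCliqueWeight G w⟩

/-- A clique of maximum weight meets `A` in a vertex of positive weight: `u` if it contains `u`,
and otherwise it has the same weight under `w'`, so `IsStableCover.exists_mem_inter_pos` applies. -/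
lemma maxCliqueWeight_sub_indicator_lt {u : V} (hu : 0 < w u) {w' : V → ℕ}
    (hw' : ∀ v ≠ u, w' v = w v) {L' : Multiset (Finset V)} (hL' : IsStableCover G w' L')
    (hcard : Multiset.card L' ≤ maxCliqueWeight G w) {A : Finset V} (hA : A ∈ L')
    (huA : u ∈ A) :
    maxCliqueWeight G (fun v => w v - if v ∈ A then 1 else 0) < maxCliqueWeight G w := by
  have hpos : 0 < maxCliqueWeight G w :=
    hu.trans_le (by simpa using sum_le_maxCliqueWeight (K := {u}) (by simp) w)
  suffices
      maxCliqueWeight G (fun v => w v - if v ∈ A then 1 else 0) ≤ maxCliqueWeight G w - 1 by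
    omega
  refine maxCliqueWeight_le_iff.2 fun K hK => ?_
  have hKw := sum_le_maxCliqueWeight hK w
  by_cases hfull : ∑ v ∈ K, w v ≤ maxCliqueWeight G w - 1
  · exact (sum_le_sum fun v _ => Nat.sub_le _ _).trans hfull
  obtain ⟨a, haK, haA, ha⟩ : ∃ a ∈ K, a ∈ A ∧ 0 < w a := by
    by_cases huK : u ∈ K
    · exact ⟨u, huK, huA, hu⟩
    have hne : ∀ v ∈ K, v ≠ u := fun v hv h => huK (h ▸ hv)
    have hKw' : ∑ v ∈ K, w' v = ∑ v ∈ K, w v := sum_congr rfl fun v hv => hw' v (hne v hv)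
    obtain ⟨a, haK, haA, ha⟩ := hL'.exists_mem_inter_pos hK (by omega) hA
    exact ⟨a, haK, haA, hw' a (hne a haK) ▸ ha⟩
  have := sum_sub_indicator_lt haK haA ha
  omega

lemma exists_isStableCover_of_two_le {u : V} (hu : 2 ≤ w u)
    (ih : ∀ w' : V → ℕ, ∑ v, w' v < ∑ v, w v →
      ∃ L, IsStableCover G w' L ∧ Multiset.card L ≤ maxCliqueWeight G w') :
    ∃ L, IsStableCover G w L ∧ Multiset.card L ≤ maxCliqueWeight G w := by
  set w' : V → ℕ := fun v => w v - if v ∈ ({u} : Finset V) then 1 else 0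
  obtain ⟨L', hL', hcard'⟩ := ih w' (sum_sub_indicator_lt (mem_univ u) (mem_singleton_self u)
    (by omega))
  have hle : maxCliqueWeight G w' ≤ maxCliqueWeight G w :=
    maxCliqueWeight_mono fun v => Nat.sub_le _ _
  rcases hle.lt_or_eq with hlt | heq
  · exact ⟨{u} ::ₘ L', hL'.cons (isStableSet_singleton G u) fun v => le_tsub_add,
      by rw [Multiset.card_cons]; omega⟩
  obtain ⟨A, hA, huA⟩ : ∃ A ∈ L', u ∈ A := by
    refine Multiset.countP_pos.1 (lt_of_lt_of_le ?_ (hL'.2 u))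
    simp only [w', mem_singleton, if_true]
    omega
  have hlt := maxCliqueWeight_sub_indicator_lt (by omega) (fun v hv => by simp [w', hv]) hL'
    (heq ▸ hcard') hA huA
  obtain ⟨L'', hL'', hcard''⟩ := ih _ (sum_sub_indicator_lt (mem_univ u) huA (by omega))
  exact ⟨A ::ₘ L'', hL''.cons (hL'.1 A hA) fun v => le_tsub_add,
    by rw [Multiset.card_cons]; omega⟩

theorem IsPerfect.exists_isStableCover (hG : IsPerfect G) (w : V → ℕ) :
    ∃ L, IsStableCover G w L ∧ Multiset.card L ≤ maxCliqueWeight G w := by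
  induction h : ∑ v, w v using Nat.strong_induction_on generalizing w with
  | _ N ih =>
    by_cases hw : ∃ u, 2 ≤ w u
    · obtain ⟨u, hu⟩ := hw
      exact exists_isStableCover_of_two_le hu fun w' hw' => ih _ (h ▸ hw') w' rfl
    · exact hG.exists_isStableCover_of_le_one fun v => by grind

end StableCover

section StablePolytope

variable {V : Type*} [Fintype V] [DecidableEq V] {G : SimpleGraph V}

lemma isCompact_STAB (G : SimpleGraph V) : IsCompact (STAB G) := by
  refine Set.Finite.isCompact_convexHull (𝕜 := ℝ) ((Set.finite_range
    fun S : Finset V => fun v => if v ∈ S then (1 : ℝ) else 0).subset ?_)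
  rintro _ ⟨S, -, rfl⟩
  exact ⟨S, rfl⟩

lemma indicator_mem_STAB {S : Finset V} (hS : IsStableSet G S) :
    (fun v => if v ∈ S then (1 : ℝ) else 0) ∈ STAB G :=
  subset_convexHull ℝ _ ⟨S, hS, rfl⟩

lemma STAB_subset_Icc (G : SimpleGraph V) : STAB G ⊆ Set.Icc 0 1 := by
  refine convexHull_min ?_ (convex_Icc 0 1)
  rintro _ ⟨S, -, rfl⟩
  constructor <;> intro v <;> by_cases hv : v ∈ S <;> simp [hv]

lemma uniform_mem_STAB [Nonempty V] (G : SimpleGraph V) :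
    (fun _ => (Fintype.card V : ℝ)⁻¹) ∈ STAB G := by
  have h := (convex_convexHull ℝ _).sum_mem (t := univ)
    (w := fun _ => (Fintype.card V : ℝ)⁻¹)
    (z := fun u v => if v ∈ ({u} : Finset V) then (1 : ℝ) else 0) (fun _ _ => by positivity)
    (by simp) fun u _ => indicator_mem_STAB (isStableSet_singleton G u)
  unfold STAB
  convert h using 1
  ext v
  simp

lemma sum_mul_le_one_of_mem_STAB {x y : V → ℝ} (hx : x ∈ STAB G) (hy : y ∈ STAB Gᶜ) :
    ∑ v, x v * y v ≤ 1 := by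
  refine convexHull_min ?_ (convex_halfSpace_le (f := fun x => ∑ v, x v * y v)
    ⟨fun a b => by simp [add_mul, sum_add_distrib], fun c a => by simp [mul_sum, mul_assoc]⟩
    1) hx
  rintro _ ⟨S, hS, rfl⟩
  refine convexHull_min ?_ (convex_halfSpace_le
    (f := fun y => ∑ v, (if v ∈ S then (1 : ℝ) else 0) * y v)
    ⟨fun a b => by simp [mul_add, sum_add_distrib], fun c a => by simp [mul_sum, mul_left_comm]⟩
    1) hy
  rintro _ ⟨C, hC, rfl⟩
  have := card_inter_le_one_of_isStableSet hS (isStableSet_compl_iff.1 hC)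
  simpa [inter_comm] using this

lemma IsStableCover.sum_mul_le_card {w : V → ℕ} {L : Multiset (Finset V)}
    (hL : IsStableCover G w L) {y : V → ℝ} (hy0 : ∀ v, 0 ≤ y v)
    (hyS : ∀ S, IsStableSet G S → ∑ v ∈ S, y v ≤ 1) :
    ∑ v, (w v : ℝ) * y v ≤ Multiset.card L := by
  calc ∑ v, (w v : ℝ) * y v ≤ ∑ v, L.countP (v ∈ ·) • y v := by
        refine sum_le_sum fun v _ => ?_
        rw [nsmul_eq_mul]
        exact mul_le_mul_of_nonneg_right (by exact_mod_cast hL.2 v) (hy0 v)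
    _ = (L.map fun A => ∑ v ∈ univ ∩ A, y v).sum := sum_countP_mem_nsmul L univ y
    _ ≤ Multiset.card L := by
        simpa using Multiset.sum_le_card_nsmul (L.map fun A => ∑ v ∈ univ ∩ A, y v) 1 (by
          intro _ hx
          obtain ⟨A, hA, rfl⟩ := Multiset.mem_map.1 hx
          simpa using hyS A (hL.1 A hA))

/-- The weighted form of perfection applies to the integral weights `⌈M c⌉₊`, which
approximate `M c` up to an error of `card V` on every clique. -/
lemma IsPerfect.exists_isClique_sum_mul_le (hG : IsPerfect G) {y : V → ℝ}
    (hy0 : ∀ v, 0 ≤ y v) (hyS : ∀ S, IsStableSet G S → ∑ v ∈ S, y v ≤ 1)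
    {c : V → ℝ} (hc : ∀ v, 0 ≤ c v) :
    ∃ K : Finset V, G.IsClique (K : Set V) ∧ ∑ v, y v * c v ≤ ∑ v ∈ K, c v := by
  classical
  obtain ⟨K₀, hK₀, hmax⟩ :=
    exists_max_image (univ.filter fun K : Finset V => G.IsClique (K : Set V))
    (fun K => ∑ v ∈ K, c v) ⟨∅, by simp⟩
  simp only [mem_filter, mem_univ, true_and] at hK₀ hmax
  refine ⟨K₀, hK₀, ?_⟩
  have hround : ∀ M : ℕ, M * ∑ v, y v * c v ≤ M * ∑ v ∈ K₀, c v + Fintype.card V := by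
    intro M
    obtain ⟨L, hL, hcard⟩ := hG.exists_isStableCover fun v => ⌈M * c v⌉₊
    obtain ⟨K, hK, hKL⟩ := exists_isClique_sum_eq_maxCliqueWeight G fun v => ⌈M * c v⌉₊
    calc (M : ℝ) * ∑ v, y v * c v ≤ ∑ v, (⌈M * c v⌉₊ : ℝ) * y v := by
          rw [mul_sum]
          refine sum_le_sum fun v _ => ?_
          nlinarith [Nat.le_ceil ((M : ℝ) * c v), hy0 v]
      _ ≤ Multiset.card L := hL.sum_mul_le_card hy0 hyS
      _ ≤ ∑ v ∈ K, (⌈M * c v⌉₊ : ℝ) := by exact_mod_cast hKL ▸ hcard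
      _ ≤ ∑ v ∈ K, ((M : ℝ) * c v + 1) :=
          sum_le_sum fun v _ => (Nat.ceil_lt_add_one (by have := hc v; positivity)).le
      _ = M * ∑ v ∈ K, c v + #K := by simp [sum_add_distrib, mul_sum]
      _ ≤ M * ∑ v ∈ K₀, c v + Fintype.card V := by
          gcongr ?_ + ?_
          · exact mul_le_mul_of_nonneg_left (hmax K hK) M.cast_nonneg
          · exact_mod_cast card_le_univ K
  by_contra! hlt
  obtain ⟨M, hM⟩ :=
    exists_nat_gt ((Fintype.card V : ℝ) / (∑ v, y v * c v - ∑ v ∈ K₀, c v))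
  rw [div_lt_iff₀ (by linarith)] at hM
  linarith [hround M]

theorem IsPerfect.mem_STAB_compl (hG : IsPerfect G) {y : V → ℝ} (hy0 : ∀ v, 0 ≤ y v)
    (hyS : ∀ S, IsStableSet G S → ∑ v ∈ S, y v ≤ 1) : y ∈ STAB Gᶜ := by
  by_contra hy
  obtain ⟨f, u, hfu, huy⟩ :=
    geometric_hahn_banach_closed_point (convex_convexHull ℝ _) (isCompact_STAB Gᶜ).isClosed hy
  set e : V → V → ℝ := fun v j => if v = j then 1 else 0
  have hf : ∀ x, f x = ∑ v, x v * f (e v) := fun x => f.toLinearMap.pi_apply_eq_sum_univ x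
  obtain ⟨K, hK, hyK⟩ :=
    hG.exists_isClique_sum_mul_le hy0 hyS (c := fun v => max (f (e v)) 0) fun v => le_max_right _ _
  set K' := K.filter fun v => 0 < f (e v)
  have hK' : f (fun v => if v ∈ K' then 1 else 0) < u :=
    hfu _ (indicator_mem_STAB
      (isStableSet_compl_iff.2 (hK.subset (coe_subset.2 (filter_subset _ K)))))
  have hK'_eq : f (fun v => if v ∈ K' then 1 else 0) = ∑ v ∈ K, max (f (e v)) 0 := by
    rw [hf]
    simp only [K', ite_mul, one_mul, zero_mul, sum_ite_mem, univ_inter, sum_filter]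
    refine sum_congr rfl fun v _ => ?_
    split_ifs with h
    exacts [(max_eq_left h.le).symm, (max_eq_right (not_lt.1 h)).symm]
  have hy_le : f y ≤ ∑ v, y v * max (f (e v)) 0 :=
    (hf y).trans_le (sum_le_sum fun v _ => mul_le_mul_of_nonneg_left (le_max_left _ _) (hy0 v))
  linarith

end StablePolytope

/-- The left side is the derivative of `∑ i, log (z i)` at `x` in the direction `y - x`. -/
lemma sum_sub_div_nonpos_of_isMaxOn_prod {ι : Type*} [Fintype ι] {s : Set (ι → ℝ)}
    (hs : Convex ℝ s) {x : ι → ℝ} (hx : x ∈ s) (hpos : ∀ i, 0 < x i)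
    (hmax : IsMaxOn (fun z => ∏ i, z i) s x) {y : ι → ℝ} (hy : y ∈ s) :
    ∑ i, (y i - x i) / x i ≤ 0 := by
  have hderiv : HasFDerivAt (fun z : ι → ℝ => ∑ i, Real.log (z i))
      (∑ i, (x i)⁻¹ • ContinuousLinearMap.proj i) x :=
    HasFDerivAt.fun_sum fun i _ => (hasFDerivAt_apply i x).log (hpos i).ne'
  have hlocal : IsLocalMaxOn (fun z : ι → ℝ => ∑ i, Real.log (z i)) s x := by
    have hnear : ∀ᶠ z in nhds x, ∀ i, 0 < z i :=
      Filter.eventually_all.2 fun i =>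
        ((continuous_apply i).tendsto x).eventually (lt_mem_nhds (hpos i))
    filter_upwards [nhdsWithin_le_nhds hnear, self_mem_nhdsWithin] with z hz hzs
    simp only [← Real.log_prod fun i _ => (hz i).ne', ← Real.log_prod fun i _ => (hpos i).ne']
    exact Real.log_le_log (prod_pos fun i _ => hz i) (hmax hzs)
  have := hlocal.hasFDerivWithinAt_nonpos hderiv.hasFDerivWithinAt
    (sub_mem_posTangentConeAt_of_segment_subset (hs.segment_subset hx hy))
  simpa [div_eq_inv_mul] using this

section Entropy

variable {V : Type*} [Fintype V]

noncomputable def entropyAt (x : V → ℝ) : ℝ :=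
  -(1 / (Fintype.card V : ℝ)) * ∑ v, Real.logb 2 (x v)

lemma logb_card_le_entropyAt_add [Nonempty V] {x z : V → ℝ} (hx : ∀ v, 0 < x v)
    (hz : ∀ v, 0 < z v) (hxz : ∑ v, x v * z v ≤ 1) :
    Real.logb 2 (Fintype.card V) ≤ entropyAt x + entropyAt z := by
  have hn : (0 : ℝ) < Fintype.card V := Nat.cast_pos.2 Fintype.card_pos
  have hlog : ∑ v, Real.log (Fintype.card V * x v * z v) ≤ 0 :=
    calc ∑ v, Real.log (Fintype.card V * x v * z v)
        ≤ ∑ v, (Fintype.card V * x v * z v - 1) :=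
          sum_le_sum fun v _ =>
            Real.log_le_sub_one_of_pos (mul_pos (mul_pos hn (hx v)) (hz v))
      _ = Fintype.card V * (∑ v, x v * z v - 1) := by
          simp [sum_sub_distrib, mul_sub, mul_sum, mul_assoc]
      _ ≤ 0 := mul_nonpos_of_nonneg_of_nonpos hn.le (by linarith)
  simp only [fun v => Real.log_mul (mul_pos hn (hx v)).ne' (hz v).ne',
    fun v => Real.log_mul hn.ne' (hx v).ne', sum_add_distrib, sum_const, card_univ,
    nsmul_eq_mul] at hlog
  simp only [entropyAt, Real.logb, ← sum_div]
  have hlog2 : 0 < Real.log 2 := Real.log_pos one_lt_two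
  field_simp
  linarith

lemma entropyAt_add_entropyAt_inv [Nonempty V] {x : V → ℝ} (hx : ∀ v, 0 < x v) :
    entropyAt x + entropyAt (fun v => (Fintype.card V * x v)⁻¹) =
      Real.logb 2 (Fintype.card V) := by
  have hn : (0 : ℝ) < Fintype.card V := Nat.cast_pos.2 Fintype.card_pos
  simp only [entropyAt, Real.logb_inv, Real.logb_mul hn.ne' (hx _).ne', sum_neg_distrib,
    sum_add_distrib, sum_const, card_univ, nsmul_eq_mul]
  field_simp
  ring

variable [DecidableEq V] {G : SimpleGraph V}

lemma graphEntropy_le_entropyAt {x : V → ℝ} (hx : x ∈ STAB G) (hpos : ∀ v, 0 < x v) :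
    graphEntropy G ≤ entropyAt x := by
  refine csInf_le ⟨0, ?_⟩ ⟨x, hx, hpos, rfl⟩
  rintro _ ⟨z, hz, -, rfl⟩
  have hz01 := STAB_subset_Icc G hz
  refine mul_nonneg_of_nonpos_of_nonpos (by simp) (sum_nonpos fun v _ => ?_)
  exact Real.logb_nonpos one_lt_two (hz01.1 v) (hz01.2 v)

lemma le_graphEntropy [Nonempty V] {a : ℝ}
    (h : ∀ x ∈ STAB G, (∀ v, 0 < x v) → a ≤ entropyAt x) : a ≤ graphEntropy G := by
  refine le_csInf ⟨_, _, uniform_mem_STAB G, fun _ => by positivity, rfl⟩ ?_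
  rintro _ ⟨x, hx, hpos, rfl⟩
  exact h x hx hpos

lemma exists_isMaxOn_prod [Nonempty V] (G : SimpleGraph V) :
    ∃ x ∈ STAB G, (∀ v, 0 < x v) ∧ IsMaxOn (fun z => ∏ v, z v) (STAB G) x := by
  obtain ⟨x, hx, hmax⟩ := (isCompact_STAB G).exists_isMaxOn ⟨_, uniform_mem_STAB G⟩
    (continuous_finsetProd _ fun v _ => continuous_apply v).continuousOn
  refine ⟨x, hx, fun v => ((STAB_subset_Icc G hx).1 v).lt_of_ne fun h => ?_, hmax⟩
  have hprod : 0 < ∏ v, x v :=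
    (prod_pos fun _ _ => by positivity).trans_le (hmax (uniform_mem_STAB G))
  exact hprod.ne' (prod_eq_zero (mem_univ v) h.symm)

lemma sum_inv_le_card_of_isMaxOn_prod {x : V → ℝ} (hx : x ∈ STAB G) (hpos : ∀ v, 0 < x v)
    (hmax : IsMaxOn (fun z => ∏ v, z v) (STAB G) x) {S : Finset V} (hS : IsStableSet G S) :
    ∑ v ∈ S, (x v)⁻¹ ≤ Fintype.card V := by
  have := sum_sub_div_nonpos_of_isMaxOn_prod (convex_convexHull ℝ _) hx hpos hmax
    (indicator_mem_STAB hS)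
  simp only [sub_div, div_self (hpos _).ne', sum_sub_distrib, ite_div, one_div, zero_div,
    sum_ite_mem, univ_inter, sum_const, card_univ, nsmul_eq_mul, mul_one] at this
  linarith

theorem logb_card_le_graphEntropy_add_compl [Nonempty V] (G : SimpleGraph V) :
    Real.logb 2 (Fintype.card V) ≤ graphEntropy G + graphEntropy Gᶜ := by
  suffices Real.logb 2 (Fintype.card V) - graphEntropy Gᶜ ≤ graphEntropy G by linarith
  refine le_graphEntropy fun x hx hxpos => ?_
  suffices Real.logb 2 (Fintype.card V) - entropyAt x ≤ graphEntropy Gᶜ by linarith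
  refine le_graphEntropy fun z hz hzpos => ?_
  linarith [logb_card_le_entropyAt_add hxpos hzpos (sum_mul_le_one_of_mem_STAB hx hz)]

theorem IsPerfect.graphEntropy_add_compl_le [Nonempty V] (hG : IsPerfect G) :
    graphEntropy G + graphEntropy Gᶜ ≤ Real.logb 2 (Fintype.card V) := by
  obtain ⟨x, hx, hpos, hmax⟩ := exists_isMaxOn_prod G
  have hn : (0 : ℝ) < Fintype.card V := Nat.cast_pos.2 Fintype.card_pos
  set y : V → ℝ := fun v => (Fintype.card V * x v)⁻¹
  have hypos : ∀ v, 0 < y v := fun v => inv_pos.2 (mul_pos hn (hpos v))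
  have hy : y ∈ STAB Gᶜ := hG.mem_STAB_compl (fun v => (hypos v).le) fun S hS => by
    simp only [y, mul_inv, ← mul_sum]
    exact (inv_mul_le_one₀ hn).2 (sum_inv_le_card_of_isMaxOn_prod hx hpos hmax hS)
  rw [← entropyAt_add_entropyAt_inv hpos]
  exact add_le_add (graphEntropy_le_entropyAt hx hpos) (graphEntropy_le_entropyAt hy hypos)

end Entropy

/-- Csiszár–Körner–Lovász–Marton–Simonyi: for a perfect graph `G` on `n ≥ 1`
vertices, `H(G) + H(Ḡ) = log₂ n`. -/
theorem entropy_add_entropy_compl {V : Type*} [Fintype V] [DecidableEq V]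
    (G : SimpleGraph V) (hn : 1 ≤ Fintype.card V) (hG : IsPerfect G) :
    graphEntropy G + graphEntropy Gᶜ = Real.logb 2 (Fintype.card V) := by
  have : Nonempty V := Fintype.card_pos_iff.1 hn
  exact le_antisymm hG.graphEntropy_add_compl_le (logb_card_le_graphEntropy_add_compl G)
end

section
/- Let P be a finite poset on ground set V. A vector x ∈ ℝ^V belongs to STAB(G(P)) if and only if there exist functions y⁻, y⁺ : V → ℝ such that: (i) x_v = y⁺_v − y⁻_v and y⁻_v ≤ y⁺_v for all v ∈ V; (ii) 0 ≤ y⁻_v for every minimal element v of P; (iii) y⁺_v ≤ 1 for every maximal element v of P; and (iv) y⁺_v ≤ y⁻_w whenever v is covered by w in P (v <_P w with no element strictly between). -/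
/-- The comparability graph of a partial order `P`: distinct `v, w` are adjacent
iff they are comparable in `P`. -/
def compGraph {V : Type*} (P : PartialOrder V) : SimpleGraph V where
  Adj v w := v ≠ w ∧ (P.le v w ∨ P.le w v)
  symm := ⟨fun v w h => ⟨h.1.symm, h.2.symm⟩⟩
  loopless := ⟨fun v h => h.1 rfl⟩

/-- The entropy of a poset: the entropy of its comparability graph. -/
noncomputable def posetEntropy {V : Type*} [Fintype V] [DecidableEq V]
    (P : PartialOrder V) : ℝ :=
  graphEntropy (compGraph P)

/-- The number `e(P)` of linear extensions of a finite poset `P`, counted as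
order-preserving bijections onto `Fin n`. -/
noncomputable def numLinExt {V : Type*} [Fintype V] (P : PartialOrder V) : ℕ :=
  Nat.card {f : V ≃ Fin (Fintype.card V) // ∀ v w : V, P.le v w → f v ≤ f w}

open MeasureTheory Set

theorem sub_mem_STAB_of_isStableSet_levelSets {V : Type*} [Fintype V] [DecidableEq V]
    {G : SimpleGraph V} {a b : V → ℝ}
    (ha : ∀ v, 0 ≤ a v) (hab : ∀ v, a v ≤ b v) (hb : ∀ v, b v ≤ 1)
    (hstable : ∀ t : ℝ, IsStableSet G {v | a v ≤ t ∧ t < b v}) :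
    b - a ∈ STAB G := by
  let μ := volume.restrict (Icc (0 : ℝ) 1)
  have : IsProbabilityMeasure μ := ⟨by simp [μ]⟩
  let f : ℝ → V → ℝ := fun t v => (Ico (a v) (b v)).indicator 1 t
  have hf : ∀ v, Integrable (f · v) μ := fun v =>
    (integrable_const 1).indicator measurableSet_Ico
  have hmean : b - a = ∫ t, f t ∂μ := by
    funext v
    rw [eval_integral hf, integral_indicator_one measurableSet_Ico,
      measureReal_restrict_apply measurableSet_Ico,
      inter_eq_left.2 (Ico_subset_Icc_self.trans (Icc_subset_Icc (ha v) (hb v))),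
      Real.volume_real_Ico_of_le (hab v), Pi.sub_apply]
  have hvertices : {x : V → ℝ | ∃ S : Finset V, IsStableSet G S ∧
      x = fun v => if v ∈ S then (1 : ℝ) else 0}.Finite :=
    (finite_range fun S : Finset V => fun v => if v ∈ S then (1 : ℝ) else 0).subset
      (by rintro _ ⟨S, -, rfl⟩; exact ⟨S, rfl⟩)
  rw [hmean]
  refine (convex_convexHull ℝ _).integral_mem (hvertices.isCompact_convexHull ℝ).isClosed
    (ae_of_all _ fun t => subset_convexHull ℝ _ ⟨_, hstable t, ?_⟩) (Integrable.of_eval hf)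
  funext v
  simp [f, indicator_apply]

theorem isStableSet_compGraph_iff {V : Type*} [PartialOrder V] {S : Finset V} :
    IsStableSet (compGraph ‹PartialOrder V›) S ↔ IsAntichain (· ≤ ·) (S : Set V) := by
  refine ⟨fun h v hv w hw hne hvw => h v hv w hw ⟨hne, .inl hvw⟩, fun h v hv w hw hadj => ?_⟩
  obtain ⟨hne, hvw | hwv⟩ := hadj
  · exact h hv hw hne hvw
  · exact h hw hv hne.symm hwv

section Potential

variable {V : Type*} [PartialOrder V]

structure IsPotential (yminus yplus : V → ℝ) : Prop where
  le : ∀ v, yminus v ≤ yplus v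
  nonneg_of_isMin : ∀ v, IsMin v → 0 ≤ yminus v
  le_one_of_isMax : ∀ v, IsMax v → yplus v ≤ 1
  le_of_covBy : ∀ v w, v ⋖ w → yplus v ≤ yminus w

namespace IsPotential

variable {yminus yplus : V → ℝ}

theorem le_of_lt [Finite V] (h : IsPotential yminus yplus) {v w : V} (hvw : v < w) :
    yplus v ≤ yminus w := by
  classical
  have := Fintype.ofFinite V
  have := Fintype.toLocallyFiniteOrder (α := V)
  have hchain := transGen_covBy_of_lt hvw
  clear hvw
  induction hchain with
  | single hcov => exact h.le_of_covBy _ _ hcov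
  | tail _ hcov ih => exact ih.trans ((h.le _).trans (h.le_of_covBy _ _ hcov))

theorem nonneg [Finite V] (h : IsPotential yminus yplus) (v : V) : 0 ≤ yminus v := by
  obtain ⟨m, hmv, hm⟩ := Finite.exists_le_minimal (p := fun _ => True) (a := v) trivial
  obtain rfl | hlt := hmv.eq_or_lt
  · exact h.nonneg_of_isMin _ (minimal_true.1 hm)
  · exact (h.nonneg_of_isMin m (minimal_true.1 hm)).trans ((h.le m).trans (h.le_of_lt hlt))

theorem le_one [Finite V] (h : IsPotential yminus yplus) (v : V) : yplus v ≤ 1 := by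
  obtain ⟨m, hvm, hm⟩ := Finite.exists_le_maximal (p := fun _ => True) (a := v) trivial
  obtain rfl | hlt := hvm.eq_or_lt
  · exact h.le_one_of_isMax _ (maximal_true.1 hm)
  · exact ((h.le_of_lt hlt).trans (h.le m)).trans (h.le_one_of_isMax m (maximal_true.1 hm))

theorem isAntichain_levelSet [Finite V] (h : IsPotential yminus yplus) (t : ℝ) :
    IsAntichain (· ≤ ·) {v | yminus v ≤ t ∧ t < yplus v} := by
  rintro v ⟨-, hv⟩ w ⟨hw, -⟩ hne hvw
  exact (hv.trans_le ((h.le_of_lt (hvw.lt_of_ne hne)).trans hw)).false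

end IsPotential

theorem IsAntichain.isPotential_indicator_upperClosure {S : Set V}
    (hS : IsAntichain (· ≤ ·) S) :
    IsPotential (((upperClosure S : Set V) \ S).indicator 1)
      ((upperClosure S : Set V).indicator 1) where
  le v := indicator_le_indicator_of_subset sdiff_subset (fun _ => zero_le_one) v
  nonneg_of_isMin v _ := indicator_nonneg (fun _ _ => zero_le_one) v
  le_one_of_isMax v _ := indicator_le_self' (fun _ _ => zero_le_one) v
  le_of_covBy v w hvw := by
    by_cases hv : v ∈ upperClosure S
    · obtain ⟨s, hs, hsv⟩ := hv
      have hw : w ∉ S := fun hw => hS hs hw (hsv.trans_lt hvw.lt).ne (hsv.trans hvw.le)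
      rw [indicator_of_mem (mem_upperClosure.2 ⟨s, hs, hsv⟩),
        indicator_of_mem (show w ∈ (upperClosure S : Set V) \ S from
          ⟨(upperClosure S).upper hvw.le ⟨s, hs, hsv⟩, hw⟩)]
      exact le_rfl
    · rw [indicator_of_notMem hv]
      exact indicator_nonneg (fun _ _ => zero_le_one) w

theorem convex_setOf_exists_isPotential :
    Convex ℝ {x : V → ℝ | ∃ yminus yplus, IsPotential yminus yplus ∧ x = yplus - yminus} := by
  rintro _ ⟨m₁, p₁, h₁, rfl⟩ _ ⟨m₂, p₂, h₂, rfl⟩ a b ha hb hab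
  refine ⟨a • m₁ + b • m₂, a • p₁ + b • p₂, ⟨fun v => ?_, fun v hv => ?_, fun v hv => ?_,
    fun v w hvw => ?_⟩, by module⟩ <;> simp only [Pi.add_apply, Pi.smul_apply, smul_eq_mul]
  · have := h₁.le v; have := h₂.le v; gcongr
  · have := h₁.nonneg_of_isMin v hv; have := h₂.nonneg_of_isMin v hv; positivity
  · have := h₁.le_one_of_isMax v hv; have := h₂.le_one_of_isMax v hv
    calc a * p₁ v + b * p₂ v ≤ a * 1 + b * 1 := by gcongr
      _ = 1 := by rw [mul_one, mul_one, hab]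
  · have := h₁.le_of_covBy v w hvw; have := h₂.le_of_covBy v w hvw; gcongr

theorem mem_STAB_compGraph_iff_exists_isPotential [Fintype V] [DecidableEq V] {x : V → ℝ} :
    x ∈ STAB (compGraph ‹PartialOrder V›) ↔
      ∃ yminus yplus, IsPotential yminus yplus ∧ x = yplus - yminus := by
  constructor
  · refine fun hx => convexHull_min ?_ convex_setOf_exists_isPotential hx
    rintro _ ⟨S, hS, rfl⟩
    refine ⟨_, _, (isStableSet_compGraph_iff.1 hS).isPotential_indicator_upperClosure, ?_⟩
    rw [← indicator_sdiff sdiff_subset, sdiff_sdiff_cancel_left subset_upperClosure]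
    funext v
    simp [indicator_apply]
  · rintro ⟨yminus, yplus, h, rfl⟩
    refine sub_mem_STAB_of_isStableSet_levelSets h.nonneg h.le h.le_one fun t => ?_
    rw [isStableSet_compGraph_iff]
    simpa using h.isAntichain_levelSet t

end Potential

/-- Characterization of points of the stable set polytope of the comparability
graph of a finite poset `P` via potentials: `x ∈ STAB(G(P))` iff there are
`y⁻, y⁺ : V → ℝ` with `x_v = y⁺_v - y⁻_v`, `y⁻_v ≤ y⁺_v`, `0 ≤ y⁻_v` for minimal
`v`, `y⁺_v ≤ 1` for maximal `v`, and `y⁺_v ≤ y⁻_w` whenever `v` is covered by `w`. -/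
theorem mem_STAB_compGraph_iff_potential {V : Type*} [Fintype V] [DecidableEq V]
    (P : PartialOrder V) (x : V → ℝ) :
    x ∈ STAB (compGraph P) ↔
      ∃ yminus yplus : V → ℝ,
        (∀ v, x v = yplus v - yminus v ∧ yminus v ≤ yplus v) ∧
        (∀ v, (∀ z, P.le z v → z = v) → 0 ≤ yminus v) ∧
        (∀ v, (∀ z, P.le v z → z = v) → yplus v ≤ 1) ∧
        (∀ v w, P.lt v w → (∀ z, ¬(P.lt v z ∧ P.lt z w)) →
          yplus v ≤ yminus w) := by
  let := P
  rw [mem_STAB_compGraph_iff_exists_isPotential]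
  constructor
  · rintro ⟨yminus, yplus, h, rfl⟩
    exact ⟨yminus, yplus, fun v => ⟨rfl, h.le v⟩,
      fun v hv => h.nonneg_of_isMin v fun z hz => (hv z hz).ge,
      fun v hv => h.le_one_of_isMax v fun z hz => (hv z hz).le,
      fun v w hvw hcov => h.le_of_covBy v w ⟨hvw, fun z hvz hzw => hcov z ⟨hvz, hzw⟩⟩⟩
  · rintro ⟨yminus, yplus, hx, hmin, hmax, hcov⟩
    exact ⟨yminus, yplus,
      ⟨fun v => (hx v).2, fun v hv => hmin v fun z hz => le_antisymm hz (hv hz),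
        fun v hv => hmax v fun z hz => le_antisymm (hv hz) hz,
        fun v w hvw => hcov v w hvw.1 fun z hz => hvw.2 hz.1 hz.2⟩,
      funext fun v => (hx v).1⟩
end

section
/- There is a universal constant C such that for every finite poset P on n ≥ 1 elements there exists a weak order W extending P with H(W) ≤ H(P) + 2·log₂(H(P) + 1) + C. -/
/-- `W` is a weak order: its ground set is partitioned into layers
`A 0, …, A (k-1)` (necessarily antichains), and `v <_W w` holds exactly when
`v` lies in an earlier layer than `w`. -/
def IsWeakOrder {V : Type*} (W : PartialOrder V) : Prop :=
  ∃ (k : ℕ) (A : Fin k → Finset V),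
    (∀ v : V, ∃! i, v ∈ A i) ∧
    (∀ v w : V, W.lt v w ↔ ∃ i j : Fin k, i < j ∧ v ∈ A i ∧ w ∈ A j)

/-- `Q` extends `P`: same ground set, and every relation of `P` holds in `Q`. -/
def Extends {V : Type*} (Q P : PartialOrder V) : Prop :=
  ∀ v w : V, P.le v w → Q.le v w

/-!
Take `x ∈ STAB(G(P))` with `-(1/n) ∑ log₂ x_v < H(P) + 1`. Chains of `P` are cliques of `G(P)`,
so the weight `s v` of the heaviest chain below `v` is at most `1`, and it grows by at least `x_v`
from any `u <_P v` to `v`. Rounding `s v` down to a multiple of `2^-(m_v + 1)`, where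
`m_v = ⌊-log₂ x_v⌋` (so that `2^-(m_v + 1) < x_v`), keeps it strictly increasing along `P`, and
the weak order `W` layered by the rounded values extends `P`. Its layers colour `G(W)` properly,
so `H(W)` is at most the entropy of the layer of a uniform random vertex, hence at most that of the
pair `(m_v, rounded index)`. The scale `m_v` has mean at most `H(P) + 1`, so entropy at most
`log₂ (H(P) + 3) + 2`, and given `m_v = j` the index takes at most `2^(j + 2)` values. Altogether
`H(W) ≤ H(P) + log₂ (H(P) + 3) + 5`.
-/

open Finset Real

section FiberEntropy

variable {V α β : Type*} [DecidableEq α] [DecidableEq β]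

/-- `#S` times the Shannon entropy (in bits) of `g` under the uniform distribution on `S`. -/
noncomputable def fiberEntropy (S : Finset V) (g : V → α) : ℝ :=
  ∑ v ∈ S, logb 2 (#S / #{w ∈ S | g w = g v})

theorem card_filter_apply_eq_pos {S : Finset V} (g : V → α) {v : V} (hv : v ∈ S) :
    (0 : ℝ) < #{w ∈ S | g w = g v} := by
  have : 0 < #{w ∈ S | g w = g v} := card_pos.mpr ⟨v, mem_filter.mpr ⟨hv, rfl⟩⟩
  exact_mod_cast this

theorem fiberEntropy_eq_sum_image (S : Finset V) (g : V → α) :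
    fiberEntropy S g =
      ∑ t ∈ S.image g, (#{w ∈ S | g w = t} : ℝ) * logb 2 (#S / #{w ∈ S | g w = t}) := by
  rw [fiberEntropy, sum_comp (fun t => logb 2 (#S / #{w ∈ S | g w = t})) g]
  simp only [nsmul_eq_mul]

/-- Gibbs' inequality. -/
theorem sum_mul_logb_div_le {ι : Type*} (T : Finset ι) (a r : ι → ℝ) (ha : ∀ t ∈ T, 0 < a t)
    (hr : ∀ t ∈ T, 0 < r t) (hr1 : ∑ t ∈ T, r t ≤ 1) :
    ∑ t ∈ T, a t * logb 2 ((∑ s ∈ T, a s) / a t) ≤ ∑ t ∈ T, a t * logb 2 (r t)⁻¹ := by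
  set N := ∑ s ∈ T, a s
  have hN : 0 ≤ N := sum_nonneg fun t ht => (ha t ht).le
  have hlog2 : 0 < log 2 := log_pos one_lt_two
  have key : ∀ t ∈ T, a t * logb 2 (N / a t) ≤ a t * logb 2 (r t)⁻¹ + (N * r t - a t) / log 2 := by
    intro t ht
    have hat := ha t ht
    have hrt := hr t ht
    have hNt : 0 < N := lt_of_lt_of_le hat (single_le_sum (fun s hs => (ha s hs).le) ht)
    have hsplit : logb 2 (N / a t) = logb 2 (r t)⁻¹ + log (N * r t / a t) / log 2 := by
      rw [logb, logb, log_inv, ← add_div, log_div hNt.ne' hat.ne',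
        log_div (mul_pos hNt hrt).ne' hat.ne', log_mul hNt.ne' hrt.ne']
      ring
    have hlog := log_le_sub_one_of_pos (show 0 < N * r t / a t by positivity)
    rw [hsplit, mul_add, ← mul_div_assoc]
    gcongr
    calc a t * log (N * r t / a t) ≤ a t * (N * r t / a t - 1) := by gcongr
      _ = N * r t - a t := by field_simp
  calc ∑ t ∈ T, a t * logb 2 (N / a t)
      ≤ ∑ t ∈ T, (a t * logb 2 (r t)⁻¹ + (N * r t - a t) / log 2) := sum_le_sum key
    _ = ∑ t ∈ T, a t * logb 2 (r t)⁻¹ + N * (∑ t ∈ T, r t - 1) / log 2 := by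
      rw [sum_add_distrib, ← sum_div, sum_sub_distrib, ← mul_sum]
      ring
    _ ≤ ∑ t ∈ T, a t * logb 2 (r t)⁻¹ := by
      have : N * (∑ t ∈ T, r t - 1) ≤ 0 := mul_nonpos_of_nonneg_of_nonpos hN (by linarith)
      linarith [div_nonpos_of_nonpos_of_nonneg this hlog2.le]

theorem fiberEntropy_le_sum_logb_inv (S : Finset V) (g : V → α) (r : α → ℝ)
    (hr : ∀ t ∈ S.image g, 0 < r t) (hr1 : ∑ t ∈ S.image g, r t ≤ 1) :
    fiberEntropy S g ≤ ∑ v ∈ S, logb 2 (r (g v))⁻¹ := by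
  have hcard : (#S : ℝ) = ∑ t ∈ S.image g, (#{w ∈ S | g w = t} : ℝ) := by
    exact_mod_cast card_eq_sum_card_image g S
  rw [fiberEntropy_eq_sum_image, sum_comp (fun t => logb 2 (r t)⁻¹) g, hcard]
  simp only [nsmul_eq_mul]
  refine sum_mul_logb_div_le _ _ r (fun t ht => ?_) hr hr1
  obtain ⟨v, hv, rfl⟩ := mem_image.mp ht
  exact card_filter_apply_eq_pos g hv

theorem fiberEntropy_le_card_mul_logb (S : Finset V) (g : V → α) {N : ℕ}
    (hN : #(S.image g) ≤ N) : fiberEntropy S g ≤ #S * logb 2 N := by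
  rcases S.eq_empty_or_nonempty with rfl | hS
  · simp [fiberEntropy]
  have hN0 : (0 : ℝ) < N := by exact_mod_cast (hS.image g).card_pos.trans_le hN
  calc fiberEntropy S g ≤ ∑ _v ∈ S, logb 2 (N : ℝ)⁻¹⁻¹ := by
        refine fiberEntropy_le_sum_logb_inv S g (fun _ => (N : ℝ)⁻¹) (fun _ _ => inv_pos.mpr hN0) ?_
        rw [sum_const, nsmul_eq_mul, ← div_eq_mul_inv, div_le_one hN0]
        exact_mod_cast hN
    _ = #S * logb 2 N := by simp

theorem fiberEntropy_comp_le (S : Finset V) (g : V → α) (φ : α → β) :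
    fiberEntropy S (φ ∘ g) ≤ fiberEntropy S g := by
  refine sum_le_sum fun v hv => logb_le_logb_of_le one_lt_two ?_ ?_
  · exact div_pos (by exact_mod_cast card_pos.mpr ⟨v, hv⟩) (card_filter_apply_eq_pos _ hv)
  · refine div_le_div_of_nonneg_left (Nat.cast_nonneg _) (card_filter_apply_eq_pos g hv) ?_
    refine Nat.cast_le.mpr (card_le_card fun w hw => ?_)
    simp only [mem_filter, Function.comp_apply] at hw ⊢
    exact ⟨hw.1, congrArg φ hw.2⟩

/-- The chain rule `H(g, k) = H(g) + H(k | g)`. -/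
theorem fiberEntropy_prodMk (S : Finset V) (g : V → α) (k : V → β) :
    fiberEntropy S (fun v => (g v, k v)) =
      fiberEntropy S g + ∑ j ∈ S.image g, fiberEntropy {v ∈ S | g v = j} k := by
  have hcond : ∑ j ∈ S.image g, fiberEntropy {v ∈ S | g v = j} k =
      ∑ v ∈ S, logb 2 (#{u ∈ S | g u = g v} / #{w ∈ {u ∈ S | g u = g v} | k w = k v}) := by
    rw [← sum_fiberwise_of_maps_to (fun v hv => mem_image_of_mem g hv)]
    refine sum_congr rfl fun j _ => ?_
    rw [fiberEntropy]
    refine sum_congr rfl fun v hv => ?_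
    rw [(mem_filter.mp hv).2]
  rw [hcond, fiberEntropy, fiberEntropy, ← sum_add_distrib]
  refine sum_congr rfl fun v hv => ?_
  have hpair : {w ∈ S | (g w, k w) = (g v, k v)} = {w ∈ {u ∈ S | g u = g v} | k w = k v} := by
    rw [filter_filter]; simp only [Prod.mk.injEq]
  have hS : (0 : ℝ) < #S := by exact_mod_cast card_pos.mpr ⟨v, hv⟩
  have hg := card_filter_apply_eq_pos g hv
  have hgk := card_filter_apply_eq_pos k (mem_filter.mpr ⟨hv, rfl⟩ : v ∈ {u ∈ S | g u = g v})
  rw [hpair, logb_div hS.ne' hgk.ne', logb_div hS.ne' hg.ne', logb_div hg.ne' hgk.ne']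
  ring

theorem mul_logb_add_two_div_add_one_le {h : ℝ} (hh : 0 ≤ h) :
    h * logb 2 ((h + 2) / (h + 1)) ≤ 2 := by
  have hlog : log ((h + 2) / (h + 1)) ≤ 1 / (h + 1) := by
    have := log_le_sub_one_of_pos (show 0 < (h + 2) / (h + 1) by positivity)
    have e : (h + 2) / (h + 1) - 1 = 1 / (h + 1) := by field_simp; ring
    linarith
  have hfrac : h * (1 / (h + 1)) ≤ 1 := by rw [mul_one_div, div_le_one (by positivity)]; linarith
  have hlog2 : 1 / 2 < log 2 := by linarith [log_two_gt_d9]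
  rw [logb, ← mul_div_assoc, div_le_iff₀ (by linarith)]
  nlinarith

/-- Compare with the geometric distribution of ratio `(h + 1) / (h + 2)`. -/
theorem fiberEntropy_le_of_sum_le (S : Finset V) (g : V → ℕ) {h : ℝ} (hh : 0 ≤ h)
    (hsum : ∑ v ∈ S, (g v : ℝ) ≤ #S * h) :
    fiberEntropy S g ≤ #S * (logb 2 (h + 2) + 2) := by
  set θ := (h + 1) / (h + 2)
  have hθ0 : 0 ≤ θ := by positivity
  have hθ1 : θ < 1 := (div_lt_one (by positivity)).mpr (by linarith)
  have hr1 : ∑ j ∈ S.image g, (h + 2)⁻¹ * θ ^ j ≤ 1 := by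
    refine ((summable_geometric_of_lt_one hθ0 hθ1).mul_left _).sum_le_tsum _
      (fun _ _ => by positivity) |>.trans_eq ?_
    rw [tsum_mul_left, tsum_geometric_of_lt_one hθ0 hθ1, ← mul_inv, inv_eq_one]
    simp only [θ]
    field_simp
    ring
  set L := logb 2 ((h + 2) / (h + 1))
  have hL : 0 ≤ L := logb_nonneg one_lt_two ((one_le_div (by positivity)).mpr (by linarith))
  have hhL : h * L ≤ 2 := mul_logb_add_two_div_add_one_le hh
  calc fiberEntropy S g ≤ ∑ v ∈ S, logb 2 ((h + 2)⁻¹ * θ ^ g v)⁻¹ :=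
        fiberEntropy_le_sum_logb_inv S g _ (fun _ _ => by positivity) hr1
    _ = ∑ v ∈ S, (logb 2 (h + 2) + g v * L) := by
        refine sum_congr rfl fun v _ => ?_
        rw [mul_inv, inv_inv, ← inv_pow, inv_div, logb_mul (by positivity) (by positivity),
          logb_pow]
    _ = #S * logb 2 (h + 2) + (∑ v ∈ S, (g v : ℝ)) * L := by
        rw [sum_add_distrib, sum_const, nsmul_eq_mul, sum_mul]
    _ ≤ #S * (logb 2 (h + 2) + 2) := by
        have := mul_le_mul_of_nonneg_right hsum hL
        nlinarith [(Nat.cast_nonneg #S : (0 : ℝ) ≤ #S)]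

end FiberEntropy

section EntropyObjective

variable {V : Type*} [Fintype V]

noncomputable def entropyObjective (x : V → ℝ) : ℝ :=
  -(1 / (Fintype.card V : ℝ)) * ∑ v, logb 2 (x v)

theorem card_mul_entropyObjective [Nonempty V] (x : V → ℝ) :
    Fintype.card V * entropyObjective x = ∑ v, -logb 2 (x v) := by
  rw [entropyObjective, sum_neg_distrib]
  field_simp

theorem entropyObjective_nonneg {x : V → ℝ} (hx0 : ∀ v, 0 < x v) (hx1 : ∀ v, x v ≤ 1) :
    0 ≤ entropyObjective x :=
  mul_nonneg_of_nonpos_of_nonpos (by simp) <|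
    sum_nonpos fun v _ => logb_nonpos one_lt_two (hx0 v).le (hx1 v)

end EntropyObjective

section StableSetPolytope

variable {V : Type*} [Fintype V] [DecidableEq V] {G : SimpleGraph V}

/-- A stable set meets a clique in at most one vertex. -/
theorem sum_le_one_of_mem_STAB {x : V → ℝ} (hx : x ∈ STAB G) {C : Finset V}
    (hC : G.IsClique (C : Set V)) : ∑ v ∈ C, x v ≤ 1 := by
  have hlin : IsLinearMap ℝ fun y : V → ℝ => ∑ v ∈ C, y v :=
    ⟨fun _ _ => sum_add_distrib, fun c y => by simp [mul_sum]⟩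
  refine convexHull_min ?_ (convex_halfSpace_le hlin 1) hx
  rintro _ ⟨S, hS, rfl⟩
  show ∑ v ∈ C, (if v ∈ S then (1 : ℝ) else 0) ≤ 1
  rw [sum_boole, Nat.cast_le_one]
  refine card_le_one.mpr fun a ha b hb => by_contra fun hab => ?_
  rw [mem_filter] at ha hb
  exact hS a ha.2 b hb.2 (hC ha.1 hb.1 hab)

theorem le_one_of_mem_STAB {x : V → ℝ} (hx : x ∈ STAB G) (v : V) : x v ≤ 1 := by
  simpa using sum_le_one_of_mem_STAB hx (C := {v}) (by simp)

theorem colorClassPoint_mem_STAB [Nonempty V] {α : Type*} [DecidableEq α] (f : V → α)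
    (hf : ∀ ⦃v w⦄, G.Adj v w → f v ≠ f w) :
    (fun v => (#{w | f w = f v} : ℝ) / Fintype.card V) ∈ STAB G := by
  have hcard : (0 : ℝ) < Fintype.card V := by exact_mod_cast Fintype.card_pos
  have hsum : ∑ t ∈ univ.image f, (#{w | f w = t} : ℝ) / Fintype.card V = 1 := by
    rw [← sum_div, div_eq_one_iff_eq hcard.ne', ← card_univ]
    exact_mod_cast (card_eq_sum_card_image f univ).symm
  have hmem : ∑ t ∈ univ.image f, ((#{w | f w = t} : ℝ) / Fintype.card V) •
      (fun v => if v ∈ ({w | f w = t} : Finset V) then (1 : ℝ) else 0) ∈ STAB G :=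
    (convex_convexHull ℝ _).sum_mem (fun _ _ => by positivity) hsum fun t _ =>
      subset_convexHull ℝ _ ⟨({w | f w = t} : Finset V), fun v hv w hw hvw =>
        hf hvw ((mem_filter.mp hv).2.trans (mem_filter.mp hw).2.symm), rfl⟩
  convert hmem using 1
  ext v
  simp only [Finset.sum_apply, Pi.smul_apply, smul_eq_mul, mem_filter, mem_univ, true_and,
    mul_ite, mul_one, mul_zero]
  rw [sum_ite_eq, if_pos (mem_image_of_mem f (mem_univ v))]

theorem graphEntropy_nonneg : 0 ≤ graphEntropy G :=
  Real.sInf_nonneg fun _ ⟨_, hx, hpos, h⟩ =>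
    h ▸ entropyObjective_nonneg hpos (le_one_of_mem_STAB hx)

theorem graphEntropy_le_entropyObjective {x : V → ℝ} (hx : x ∈ STAB G) (hpos : ∀ v, 0 < x v) :
    graphEntropy G ≤ entropyObjective x :=
  csInf_le ⟨0, fun _ ⟨_, hy, hypos, h⟩ => h ▸ entropyObjective_nonneg hypos (le_one_of_mem_STAB hy)⟩
    ⟨x, hx, hpos, rfl⟩

theorem exists_entropyObjective_lt_graphEntropy_add_one [Nonempty V] :
    ∃ x ∈ STAB G, (∀ v, 0 < x v) ∧ entropyObjective x < graphEntropy G + 1 := by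
  have hpos : ∀ v : V, (0 : ℝ) < #{w | id w = id v} / Fintype.card V := fun v =>
    div_pos (card_filter_apply_eq_pos id (mem_univ v)) (by exact_mod_cast Fintype.card_pos)
  have hne : {h : ℝ | ∃ x ∈ STAB G, (∀ v, 0 < x v) ∧ h = entropyObjective x}.Nonempty :=
    ⟨_, _, colorClassPoint_mem_STAB id fun _ _ h => h.ne, hpos, rfl⟩
  obtain ⟨_, ⟨x, hx, hxpos, rfl⟩, hlt⟩ := Real.lt_sInf_add_pos hne one_pos
  exact ⟨x, hx, hxpos, hlt⟩

theorem graphEntropy_le_fiberEntropy [Nonempty V] {α : Type*} [DecidableEq α] (f : V → α)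
    (hf : ∀ ⦃v w⦄, G.Adj v w → f v ≠ f w) :
    graphEntropy G ≤ fiberEntropy univ f / Fintype.card V := by
  refine (graphEntropy_le_entropyObjective (colorClassPoint_mem_STAB f hf) fun v =>
    div_pos (card_filter_apply_eq_pos f (mem_univ v)) (by exact_mod_cast Fintype.card_pos)).trans_eq ?_
  have hflip : ∀ v, logb 2 ((#{w | f w = f v} : ℝ) / Fintype.card V) =
      -logb 2 (Fintype.card V / #{w | f w = f v}) := fun v => by rw [← logb_inv, inv_div]
  simp only [entropyObjective, fiberEntropy, card_univ, hflip, sum_neg_distrib]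
  ring

end StableSetPolytope

section LayerOrder

variable {V α : Type*}

@[reducible] def layerOrder [Preorder α] (f : V → α) : PartialOrder V where
  le v w := v = w ∨ f v < f w
  le_refl _ := Or.inl rfl
  le_trans _ _ _ := by
    rintro (rfl | h) (rfl | h')
    exacts [Or.inl rfl, Or.inr h', Or.inr h, Or.inr (h.trans h')]
  le_antisymm _ _ := by
    rintro (rfl | h) (h' | h')
    exacts [rfl, rfl, h'.symm, absurd (h.trans h') (lt_irrefl _)]

theorem layerOrder_lt_iff [Preorder α] (f : V → α) {v w : V} :
    (layerOrder f).lt v w ↔ f v < f w := by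
  refine ⟨?_, fun h => ⟨Or.inr h, ?_⟩⟩
  · rintro ⟨rfl | h, hn⟩
    exacts [absurd (Or.inl rfl) hn, h]
  · rintro (rfl | h')
    exacts [lt_irrefl _ h, lt_asymm h h']

theorem apply_ne_of_compGraph_layerOrder_adj [Preorder α] (f : V → α) {v w : V}
    (h : (compGraph (layerOrder f)).Adj v w) : f v ≠ f w := by
  obtain ⟨hne, (rfl | hlt) | (rfl | hlt)⟩ := h
  exacts [absurd rfl hne, hlt.ne, absurd rfl hne, hlt.ne']

theorem isWeakOrder_layerOrder [Fintype V] [LinearOrder α] (f : V → α) :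
    IsWeakOrder (layerOrder f) := by
  set e := (univ.image f).orderIsoOfFin rfl
  have hf : ∀ v, f v ∈ univ.image f := fun v => mem_image_of_mem f (mem_univ v)
  have he : ∀ v i, f v = e i ↔ e.symm ⟨f v, hf v⟩ = i := fun v i => by
    rw [OrderIso.symm_apply_eq, Subtype.ext_iff, eq_comm]
  refine ⟨_, fun i => {v | f v = e i}, fun v => ⟨e.symm ⟨f v, hf v⟩, ?_, fun i hi => ?_⟩,
    fun v w => ?_⟩
  · simp
  · exact ((he v i).mp (mem_filter.mp hi).2).symm
  · simp only [layerOrder_lt_iff, mem_filter, mem_univ, true_and, he]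
    constructor
    · exact fun h => ⟨_, _, e.symm.lt_iff_lt.mpr h, rfl, rfl⟩
    · rintro ⟨i, j, hij, rfl, rfl⟩
      simpa using hij

end LayerOrder

theorem posetEntropy_layerOrder_le {V α : Type*} [Fintype V] [DecidableEq V] [Nonempty V]
    [LinearOrder α] (f : V → α) :
    posetEntropy (layerOrder f) ≤ fiberEntropy univ f / Fintype.card V :=
  graphEntropy_le_fiberEntropy f fun _ _ => apply_ne_of_compGraph_layerOrder_adj f

theorem isClique_compGraph_of_isChain {V : Type*} {P : PartialOrder V} {C : Set V}
    (hC : IsChain P.le C) : (compGraph P).IsClique C :=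
  fun _ hv _ hw hvw => ⟨hvw, hC hv hw hvw⟩

section DyadicScale

variable {V : Type*} (x : V → ℝ)

noncomputable def dyadicScale (v : V) : ℕ := ⌊-logb 2 (x v)⌋₊

theorem inv_two_pow_dyadicScale_lt {v : V} (hv : 0 < x v) :
    ((2 : ℝ) ^ (dyadicScale x v + 1))⁻¹ < x v := by
  have h : -logb 2 (x v) < dyadicScale x v + 1 := Nat.lt_floor_add_one _
  rw [← logb_lt_logb_iff one_lt_two (by positivity) hv, logb_inv, logb_pow,
    logb_self_eq_one one_lt_two]
  push_cast
  linarith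

theorem dyadicScale_le {v : V} (hv0 : 0 < x v) (hv1 : x v ≤ 1) :
    (dyadicScale x v : ℝ) ≤ -logb 2 (x v) :=
  Nat.floor_le (neg_nonneg.mpr (logb_nonpos one_lt_two hv0.le hv1))

end DyadicScale

section ChainWeight

variable {V : Type*} [Fintype V] (P : PartialOrder V) (x : V → ℝ)

open Classical in
noncomputable def chainsBelow (v : V) : Finset (Finset V) :=
  {C | IsChain P.le (C : Set V) ∧ ∀ u ∈ C, P.le u v}

theorem mem_chainsBelow {v : V} {C : Finset V} :
    C ∈ chainsBelow P v ↔ IsChain P.le (C : Set V) ∧ ∀ u ∈ C, P.le u v := by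
  simp [chainsBelow]

noncomputable def chainWeight (v : V) : ℝ :=
  (chainsBelow P v).sup' ⟨∅, (mem_chainsBelow P).mpr (by simp)⟩ fun C => ∑ u ∈ C, x u

theorem chainWeight_nonneg (v : V) : 0 ≤ chainWeight P x v :=
  calc (0 : ℝ) = ∑ u ∈ (∅ : Finset V), x u := sum_empty.symm
    _ ≤ chainWeight P x v := le_sup' (fun C => ∑ u ∈ C, x u) ((mem_chainsBelow P).mpr (by simp))

theorem chainWeight_le_one (hx : ∀ C : Finset V, IsChain P.le (C : Set V) → ∑ u ∈ C, x u ≤ 1)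
    (v : V) : chainWeight P x v ≤ 1 :=
  sup'_le _ _ fun C hC => hx C ((mem_chainsBelow P).mp hC).1

theorem chainWeight_add_le {u v : V} (huv : P.le u v) (hne : u ≠ v) :
    chainWeight P x u + x v ≤ chainWeight P x v := by
  classical
  obtain ⟨C, hC, hCu⟩ := exists_mem_eq_sup' ⟨∅, (mem_chainsBelow P).mpr (by simp)⟩
    fun C : Finset V => ∑ u ∈ C, x u
  obtain ⟨hchain, hbelow⟩ := (mem_chainsBelow P).mp hC
  have hvC : v ∉ C := fun hv => hne (P.le_antisymm u v huv (hbelow v hv))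
  have hinsert : insert v C ∈ chainsBelow P v := by
    refine (mem_chainsBelow P).mpr ⟨?_, fun w hw => ?_⟩
    · rw [coe_insert]
      exact hchain.insert fun w hw _ => Or.inr (P.le_trans w u v (hbelow w hw) huv)
    · rcases mem_insert.mp hw with rfl | hw
      exacts [P.le_refl w, P.le_trans w u v (hbelow w hw) huv]
  calc chainWeight P x u + x v = ∑ w ∈ insert v C, x w := by
        rw [chainWeight, hCu, sum_insert hvC, add_comm]
    _ ≤ chainWeight P x v := le_sup' (fun C => ∑ u ∈ C, x u) hinsert

noncomputable def dyadicIndex (v : V) : ℕ := ⌊chainWeight P x v * 2 ^ (dyadicScale x v + 1)⌋₊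

noncomputable def dyadicLayer (v : V) : ℝ := dyadicIndex P x v / 2 ^ (dyadicScale x v + 1)

variable {P x}

theorem dyadicIndex_le (hx : ∀ C : Finset V, IsChain P.le (C : Set V) → ∑ u ∈ C, x u ≤ 1) (v : V) :
    dyadicIndex P x v ≤ 2 ^ (dyadicScale x v + 1) := by
  refine Nat.floor_le_of_le ?_
  push_cast
  exact mul_le_of_le_one_left (by positivity) (chainWeight_le_one P x hx v)

theorem dyadicLayer_lt_dyadicLayer (hx : ∀ v, 0 < x v) {u v : V} (huv : P.le u v) (hne : u ≠ v) :
    dyadicLayer P x u < dyadicLayer P x v := by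
  have hround : ∀ w, chainWeight P x w - ((2 : ℝ) ^ (dyadicScale x w + 1))⁻¹ < dyadicLayer P x w ∧
      dyadicLayer P x w ≤ chainWeight P x w := fun w => by
    have hpow : (0 : ℝ) < 2 ^ (dyadicScale x w + 1) := by positivity
    rw [dyadicLayer, dyadicIndex, lt_div_iff₀ hpow, div_le_iff₀ hpow, sub_mul,
      inv_mul_cancel₀ hpow.ne']
    exact ⟨Nat.sub_one_lt_floor _,
      Nat.floor_le (mul_nonneg (chainWeight_nonneg P x w) hpow.le)⟩
  linarith [hround u, hround v, chainWeight_add_le P x huv hne,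
    inv_two_pow_dyadicScale_lt x (hx v)]

/-- Within scale `j`, the index takes at most `2 ^ (j + 1) + 1 ≤ 2 ^ (j + 2)` values. -/
theorem fiberEntropy_dyadicIndex_le
    (hx : ∀ C : Finset V, IsChain P.le (C : Set V) → ∑ u ∈ C, x u ≤ 1) (j : ℕ) :
    fiberEntropy {v | dyadicScale x v = j} (dyadicIndex P x) ≤
      #{v | dyadicScale x v = j} * ((j : ℝ) + 2) := by
  have hN : #(({v | dyadicScale x v = j} : Finset V).image (dyadicIndex P x)) ≤ 2 ^ (j + 2) := by
    calc _ ≤ #(range (2 ^ (j + 1) + 1)) := card_le_card <| image_subset_iff.mpr fun v hv =>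
          mem_range.mpr (Nat.lt_succ_of_le ((mem_filter.mp hv).2 ▸ dyadicIndex_le hx v))
      _ ≤ 2 ^ (j + 2) := by
          rw [card_range, pow_succ 2 (j + 1)]
          linarith [Nat.one_le_two_pow (n := j + 1)]
  refine (fiberEntropy_le_card_mul_logb _ _ hN).trans_eq ?_
  rw [Nat.cast_pow, Nat.cast_ofNat, logb_pow, logb_self_eq_one one_lt_two]
  push_cast
  ring

theorem fiberEntropy_dyadicLayer_le [Nonempty V] (hx0 : ∀ v, 0 < x v)
    (hx : ∀ C : Finset V, IsChain P.le (C : Set V) → ∑ u ∈ C, x u ≤ 1) :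
    fiberEntropy univ (dyadicLayer P x) ≤
      Fintype.card V * (entropyObjective x + 4 + logb 2 (entropyObjective x + 2)) := by
  set m := dyadicScale x
  set q := dyadicIndex P x
  set h := entropyObjective x
  have hx1 : ∀ v, x v ≤ 1 := fun v => by simpa using hx {v} (by simp)
  have hh : 0 ≤ h := entropyObjective_nonneg hx0 hx1
  have hm : ∑ v ∈ univ, (m v : ℝ) ≤ #(univ : Finset V) * h := by
    rw [card_univ, card_mul_entropyObjective]
    exact sum_le_sum fun v _ => dyadicScale_le x (hx0 v) (hx1 v)
  have hq := fiberEntropy_dyadicIndex_le hx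
  calc fiberEntropy univ (dyadicLayer P x) ≤ fiberEntropy univ (fun v => (m v, q v)) :=
        fiberEntropy_comp_le univ (fun v => (m v, q v)) fun p => (p.2 : ℝ) / 2 ^ (p.1 + 1)
    _ = fiberEntropy univ m + ∑ j ∈ univ.image m, fiberEntropy {v ∈ univ | m v = j} q :=
        fiberEntropy_prodMk _ _ _
    _ ≤ #(univ : Finset V) * (logb 2 (h + 2) + 2) +
          ∑ j ∈ univ.image m, #{v ∈ univ | m v = j} * ((j : ℝ) + 2) :=
        add_le_add (fiberEntropy_le_of_sum_le univ m hh hm) (sum_le_sum fun j _ => hq j)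
    _ = #(univ : Finset V) * (logb 2 (h + 2) + 2) + ∑ v, ((m v : ℝ) + 2) := by
        rw [sum_comp (fun j : ℕ => (j : ℝ) + 2) m]
        simp only [nsmul_eq_mul]
    _ ≤ Fintype.card V * (h + 4 + logb 2 (h + 2)) := by
        rw [card_univ] at hm
        rw [sum_add_distrib, sum_const, nsmul_eq_mul, card_univ]
        linarith

end ChainWeight

theorem add_four_add_logb_le {h H : ℝ} (hH : 0 ≤ H) (hh0 : 0 ≤ h) (hh : h < H + 1) :
    h + 4 + logb 2 (h + 2) ≤ H + 2 * logb 2 (H + 1) + 7 := by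
  have hle : logb 2 (h + 2) ≤ logb 2 (2 ^ 2 * (H + 1)) :=
    logb_le_logb_of_le one_lt_two (by linarith) (by linarith)
  rw [logb_mul (by norm_num) (by linarith), logb_pow, logb_self_eq_one one_lt_two] at hle
  have hH1 : 0 ≤ logb 2 (H + 1) := logb_nonneg one_lt_two (by linarith)
  push_cast at hle
  linarith

/-- There is a universal constant `C` such that every finite poset `P` on `n ≥ 1`
elements admits a weak order extension `W` with
`H(W) ≤ H(P) + 2·log₂(H(P) + 1) + C`. -/
theorem exists_weakOrder_extension_entropy_log :
    ∃ C : ℝ, ∀ (n : ℕ), 1 ≤ n → ∀ P : PartialOrder (Fin n),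
      ∃ W : PartialOrder (Fin n), IsWeakOrder W ∧ Extends W P ∧
        posetEntropy W ≤
          posetEntropy P + 2 * Real.logb 2 (posetEntropy P + 1) + C := by
  refine ⟨7, fun n hn P => ?_⟩
  have : Nonempty (Fin n) := ⟨⟨0, hn⟩⟩
  obtain ⟨x, hx, hpos, hlt⟩ := exists_entropyObjective_lt_graphEntropy_add_one (G := compGraph P)
  have hchain : ∀ C : Finset (Fin n), IsChain P.le (C : Set (Fin n)) → ∑ u ∈ C, x u ≤ 1 :=
    fun C hC => sum_le_one_of_mem_STAB hx (isClique_compGraph_of_isChain hC)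
  refine ⟨layerOrder (dyadicLayer P x), isWeakOrder_layerOrder _, fun u v huv => ?_, ?_⟩
  · rcases eq_or_ne u v with rfl | hne
    exacts [Or.inl rfl, Or.inr (dyadicLayer_lt_dyadicLayer hpos huv hne)]
  have hcard : (0 : ℝ) < Fintype.card (Fin n) := by exact_mod_cast Fintype.card_pos
  calc posetEntropy (layerOrder (dyadicLayer P x))
      ≤ fiberEntropy univ (dyadicLayer P x) / Fintype.card (Fin n) := posetEntropy_layerOrder_le _
    _ ≤ entropyObjective x + 4 + logb 2 (entropyObjective x + 2) :=
      (div_le_iff₀' hcard).mpr (fiberEntropy_dyadicLayer_le hpos hchain)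
    _ ≤ _ := add_four_add_logb_le graphEntropy_nonneg
      (entropyObjective_nonneg hpos (le_one_of_mem_STAB hx)) hlt
end
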